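/- arXiv:2005.02584 — 2 statements merged into one kernel-verified Lean document; each statement's English description precedes it below -/
import Mathlib

section
/- Let φ : (0,∞) → (0,∞) satisfy the weak scaling property with constants 0 < σ₁ ≤ σ₂ < 2 and a ≥ 1. For ρ ∈ (0,1), define φ̄(r) = φ(ρr)/φ(ρ) and c_ψ = (∫₀¹ r/ψ(r) dr)⁻¹ for a scale function ψ. Then φ(ρ) · c_{φ̄}/c_φ ≤ 1 + a², i.e., ρ² (∫₀¹ r/φ(r) dr)(∫₀^ρ r/φ(r) dr)⁻¹ ≤ 1 + a². -/
/-!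
Since `σ₁ ≥ 0`, the lower scaling bound gives `φ (ρ x) ≤ a φ x`, i.e.
`x / φ x ≤ (a / ρ) · (ρ x) / φ (ρ x)`. Integrating over `(0, 1)` and substituting `r = ρ x`
yields `ρ² ∫₀¹ r / φ r ≤ a ∫₀^ρ r / φ r`, so the ratio is at most `a ≤ 1 + a²`. When `r / φ r`
is not integrable on `(0, ρ)`, it is not integrable on `(0, 1)` either and both integrals are `0`.
-/
open MeasureTheory Set

theorem setIntegral_Ioo_zero_comp_mul_left (f : ℝ → ℝ) {c b : ℝ} (hc : 0 < c) (hb : 0 ≤ b) :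
    ∫ x in Ioo 0 b, f (c * x) = c⁻¹ * ∫ x in Ioo 0 (c * b), f x := by
  rw [← integral_Ioc_eq_integral_Ioo, ← integral_Ioc_eq_integral_Ioo,
    ← intervalIntegral.integral_of_le hb, ← intervalIntegral.integral_of_le (by positivity),
    intervalIntegral.integral_comp_mul_left f hc.ne', mul_zero, smul_eq_mul]

theorem MeasureTheory.IntegrableOn.comp_mul_left_Ioo_zero {f : ℝ → ℝ} {c b : ℝ} (hc : 0 < c)
    (hb : 0 ≤ b) (hf : IntegrableOn f (Ioo 0 (c * b))) :
    IntegrableOn (fun x => f (c * x)) (Ioo 0 b) := by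
  have := ((intervalIntegrable_iff_integrableOn_Ioo_of_le (by positivity)).2 hf).comp_mul_left
    (c := c)
  rw [zero_div, mul_div_cancel_left₀ b hc.ne'] at this
  exact (intervalIntegrable_iff_integrableOn_Ioo_of_le hb).1 this

theorem setIntegral_Ioo_zero_le_of_le_comp_mul_left {f : ℝ → ℝ} {C ρ b : ℝ} (hρ₀ : 0 < ρ)
    (hρ₁ : ρ ≤ 1) (hb : 0 ≤ b) (hf₀ : ∀ x ∈ Ioo 0 b, 0 ≤ f x)
    (hf : ∀ x ∈ Ioo 0 b, f x ≤ C * f (ρ * x)) :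
    ∫ x in Ioo 0 b, f x ≤ C * ρ⁻¹ * ∫ x in Ioo 0 (ρ * b), f x := by
  by_cases hint : IntegrableOn f (Ioo 0 (ρ * b))
  · calc ∫ x in Ioo 0 b, f x ≤ ∫ x in Ioo 0 b, C * f (ρ * x) :=
          integral_mono_of_nonneg ((ae_restrict_iff' measurableSet_Ioo).2 (ae_of_all _ hf₀))
            ((hint.comp_mul_left_Ioo_zero hρ₀ hb).const_mul C)
            ((ae_restrict_iff' measurableSet_Ioo).2 (ae_of_all _ hf))
      _ = C * ρ⁻¹ * ∫ x in Ioo 0 (ρ * b), f x := by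
          rw [integral_const_mul, setIntegral_Ioo_zero_comp_mul_left f hρ₀ hb, mul_assoc]
  · have hsub : Ioo 0 (ρ * b) ⊆ Ioo 0 b :=
      Ioo_subset_Ioo_right (mul_le_of_le_one_left hb hρ₁)
    have hint' : ¬IntegrableOn f (Ioo 0 b) := fun h => hint (h.mono_set hsub)
    rw [integral_undef hint, integral_undef hint', mul_zero]

theorem le_mul_of_lowerScaling {φ : ℝ → ℝ} {a σ r R : ℝ} (ha : 0 < a) (hσ : 0 ≤ σ)
    (hr : 0 < r) (hrR : r ≤ R) (hφr : 0 < φ r) (hscal : a⁻¹ * (R / r) ^ σ ≤ φ R / φ r) :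
    φ r ≤ a * φ R := by
  have hpow : 1 ≤ (R / r) ^ σ := Real.one_le_rpow ((one_le_div hr).2 hrR) hσ
  have : a⁻¹ ≤ φ R / φ r := le_trans (le_mul_of_one_le_right (by positivity) hpow) hscal
  rw [inv_le_iff_one_le_mul₀ ha, div_mul_eq_mul_div, one_le_div hφr] at this
  linarith

theorem div_le_mul_inv_mul_div_comp_mul {φ : ℝ → ℝ} {a ρ x : ℝ} (ha : 0 < a) (hρ : 0 < ρ)
    (hx : 0 < x) (hφρx : 0 < φ (ρ * x)) (hle : φ (ρ * x) ≤ a * φ x) :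
    x / φ x ≤ a * ρ⁻¹ * (ρ * x / φ (ρ * x)) :=
  calc x / φ x = a * x / (a * φ x) := (mul_div_mul_left _ _ ha.ne').symm
    _ ≤ a * x / φ (ρ * x) := div_le_div_of_nonneg_left (by positivity) hφρx hle
    _ = a * ρ⁻¹ * (ρ * x / φ (ρ * x)) := by field_simp

theorem cphi_rescaled_bound_general (σ₁ σ₂ a : ℝ) (hσ₁ : 0 < σ₁) (ha : 1 ≤ a)
    (φ : ℝ → ℝ) (hφpos : ∀ r : ℝ, 0 < r → 0 < φ r)
    (hscal : ∀ r R : ℝ, 0 < r → r ≤ R →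
      a⁻¹ * (R / r) ^ σ₁ ≤ φ R / φ r ∧ φ R / φ r ≤ a * (R / r) ^ σ₂)
    (ρ : ℝ) (hρ : ρ ∈ Set.Ioo (0 : ℝ) 1) :
    ρ ^ 2 * (∫ r in Set.Ioo (0 : ℝ) 1, r / φ r) *
      (∫ r in Set.Ioo (0 : ℝ) ρ, r / φ r)⁻¹ ≤ 1 + a ^ 2 := by
  obtain ⟨hρ₀, hρ₁⟩ := hρ
  have ha₀ : 0 < a := one_pos.trans_le ha
  have hpoint : ∀ x ∈ Ioo (0 : ℝ) 1, x / φ x ≤ a * ρ⁻¹ * (ρ * x / φ (ρ * x)) := by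
    intro x ⟨hx, _⟩
    have hρx : 0 < ρ * x := mul_pos hρ₀ hx
    have hρxx : ρ * x ≤ x := mul_le_of_le_one_left hx.le hρ₁.le
    have hle : φ (ρ * x) ≤ a * φ x :=
      le_mul_of_lowerScaling ha₀ hσ₁.le hρx hρxx (hφpos _ hρx) (hscal _ _ hρx hρxx).1
    exact div_le_mul_inv_mul_div_comp_mul ha₀ hρ₀ hx (hφpos _ hρx) hle
  have hkey := setIntegral_Ioo_zero_le_of_le_comp_mul_left hρ₀ hρ₁.le zero_le_one
    (fun x hx => div_nonneg hx.1.le (hφpos x hx.1).le) hpoint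
  rw [mul_one] at hkey
  have hA : 0 ≤ ∫ r in Ioo 0 ρ, r / φ r :=
    setIntegral_nonneg measurableSet_Ioo fun x hx => div_nonneg hx.1.le (hφpos x hx.1).le
  calc ρ ^ 2 * (∫ r in Ioo 0 1, r / φ r) * (∫ r in Ioo 0 ρ, r / φ r)⁻¹
      ≤ ρ ^ 2 * (a * ρ⁻¹ * ρ⁻¹ * ∫ r in Ioo 0 ρ, r / φ r) * (∫ r in Ioo 0 ρ, r / φ r)⁻¹ := by
        gcongr
    _ = a * ((∫ r in Ioo 0 ρ, r / φ r) * (∫ r in Ioo 0 ρ, r / φ r)⁻¹) := by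
        field_simp
    _ ≤ a := mul_le_of_le_one_right ha₀.le mul_inv_le_one
    _ ≤ 1 + a ^ 2 := by nlinarith

/-- Lemma 2.3(ii): `φ(ρ) c_{φ̄}/c_φ = ρ² (∫₀¹ r/φ)(∫₀^ρ r/φ)⁻¹ ≤ 1 + a²`. -/
theorem cphi_rescaled_bound (σ₁ σ₂ a : ℝ) (hσ₁ : 0 < σ₁) (hσ₁₂ : σ₁ ≤ σ₂) (hσ₂ : σ₂ < 2)
    (ha : 1 ≤ a) (φ : ℝ → ℝ) (hφpos : ∀ r : ℝ, 0 < r → 0 < φ r) (hφmeas : Measurable φ)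
    (hscal : ∀ r R : ℝ, 0 < r → r ≤ R →
      a⁻¹ * (R / r) ^ σ₁ ≤ φ R / φ r ∧ φ R / φ r ≤ a * (R / r) ^ σ₂)
    (ρ : ℝ) (hρ : ρ ∈ Set.Ioo (0 : ℝ) 1) :
    ρ ^ 2 * (∫ r in Set.Ioo (0 : ℝ) 1, r / φ r) *
      (∫ r in Set.Ioo (0 : ℝ) ρ, r / φ r)⁻¹ ≤ 1 + a ^ 2 :=
  cphi_rescaled_bound_general σ₁ σ₂ a hσ₁ ha φ hφpos hscal ρ hρ
end

section
/- Let 0 < σ₀ ≤ σ₁ ≤ σ₂ < 2, a ≥ 1, and let φ satisfy the weak scaling property with these constants and φ(1)=1. Define Φ(R) = φ(R)(∫₀¹ r/φ(r) dr)(∫₀¹ rφ(R)/φ(rR) dr)⁻¹ for R ∈ (0,1). Then Φ(R) ≤ R² + a²R^{σ₁} ≤ (1+a²)R^{σ₀} for all R ∈ (0,1). -/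
open MeasureTheory

/-- The quantity `Φ(R) = φ(R)(∫₀¹ r/φ(r) dr)(∫₀¹ rφ(R)/φ(rR) dr)⁻¹` satisfies
`Φ(R) ≤ R² + a² R^{σ₁} ≤ (1+a²) R^{σ₀}` for `R ∈ (0,1)`. -/
theorem Phi_bound (σ₀ σ₁ σ₂ a : ℝ) (hσ₀ : 0 < σ₀) (hσ₀₁ : σ₀ ≤ σ₁) (hσ₁₂ : σ₁ ≤ σ₂)
    (hσ₂ : σ₂ < 2) (ha : 1 ≤ a) (φ : ℝ → ℝ) (hφpos : ∀ r : ℝ, 0 < r → 0 < φ r)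
    (hφ1 : φ 1 = 1) (hφmeas : Measurable φ)
    (hscal : ∀ r R : ℝ, 0 < r → r ≤ R →
      a⁻¹ * (R / r) ^ σ₁ ≤ φ R / φ r ∧ φ R / φ r ≤ a * (R / r) ^ σ₂) :
    ∀ R : ℝ, R ∈ Set.Ioo (0 : ℝ) 1 →
      φ R * (∫ r in Set.Ioo (0 : ℝ) 1, r / φ r) *
          (∫ r in Set.Ioo (0 : ℝ) 1, r * φ R / φ (r * R))⁻¹ ≤ R ^ 2 + a ^ 2 * R ^ σ₁ ∧
        R ^ 2 + a ^ 2 * R ^ σ₁ ≤ (1 + a ^ 2) * R ^ σ₀ := by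
  intro R hR
  obtain ⟨hR0, hR1⟩ := hR
  have ha0 : (0 : ℝ) < a := lt_of_lt_of_le one_pos ha
  have hφR : 0 < φ R := hφpos R hR0
  have h2σ₁ : (0 : ℝ) < 2 - σ₁ := by linarith
  have h2σ₂ : (0 : ℝ) < 2 - σ₂ := by linarith
  set g : ℝ → ℝ := fun r => r / φ r with hgdef
  have hgmeas : Measurable g := measurable_id.div hφmeas
  have hgnonneg : ∀ s : ℝ, 0 < s → 0 ≤ g s := fun s hs =>
    div_nonneg hs.le (hφpos s hs).le
  -- pointwise bounds
  have hub2 : ∀ s : ℝ, 0 < s → s ≤ R → g s ≤ a * R ^ σ₂ / φ R * s ^ (1 - σ₂) := by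
    intro s hs hsR
    have hφs := hφpos s hs
    have h := (hscal s R hs hsR).2
    rw [Real.div_rpow hR0.le hs.le, div_le_iff₀ hφs] at h
    have hs1 : s ^ (1 - σ₂) = s / s ^ σ₂ := by
      rw [Real.rpow_sub hs, Real.rpow_one]
    have hsσ : (0:ℝ) < s ^ σ₂ := Real.rpow_pos_of_pos hs _
    show s / φ s ≤ a * R ^ σ₂ / φ R * s ^ (1 - σ₂)
    rw [div_le_iff₀ hφs, hs1]
    have key : a * R ^ σ₂ / φ R * (s / s ^ σ₂) * φ s
        = s / φ R * (a * (R ^ σ₂ / s ^ σ₂) * φ s) := by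
      field_simp
    calc s = s / φ R * φ R := by field_simp
      _ ≤ s / φ R * (a * (R ^ σ₂ / s ^ σ₂) * φ s) :=
          mul_le_mul_of_nonneg_left h (by positivity)
      _ = a * R ^ σ₂ / φ R * (s / s ^ σ₂) * φ s := key.symm
  have hlb : ∀ s : ℝ, 0 < s → s ≤ R → a⁻¹ * R ^ σ₁ / φ R * s ^ (1 - σ₁) ≤ g s := by
    intro s hs hsR
    have hφs := hφpos s hs
    have h := (hscal s R hs hsR).1
    rw [Real.div_rpow hR0.le hs.le, le_div_iff₀ hφs] at h
    have hs1 : s ^ (1 - σ₁) = s / s ^ σ₁ := by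
      rw [Real.rpow_sub hs, Real.rpow_one]
    have hsσ : (0:ℝ) < s ^ σ₁ := Real.rpow_pos_of_pos hs _
    show a⁻¹ * R ^ σ₁ / φ R * s ^ (1 - σ₁) ≤ s / φ s
    rw [le_div_iff₀ hφs, hs1]
    have key : a⁻¹ * R ^ σ₁ / φ R * (s / s ^ σ₁) * φ s
        = s / φ R * (a⁻¹ * (R ^ σ₁ / s ^ σ₁) * φ s) := by
      field_simp
    calc a⁻¹ * R ^ σ₁ / φ R * (s / s ^ σ₁) * φ s
        = s / φ R * (a⁻¹ * (R ^ σ₁ / s ^ σ₁) * φ s) := key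
      _ ≤ s / φ R * φ R := mul_le_mul_of_nonneg_left h (by positivity)
      _ = s := by field_simp
  have hub1 : ∀ s : ℝ, R ≤ s → g s ≤ a * R ^ σ₁ / φ R * s ^ (1 - σ₁) := by
    intro s hsR
    have hs : 0 < s := lt_of_lt_of_le hR0 hsR
    have hφs := hφpos s hs
    have h := (hscal R s hR0 hsR).1
    rw [Real.div_rpow hs.le hR0.le, le_div_iff₀ hφR] at h
    have hs1 : s ^ (1 - σ₁) = s / s ^ σ₁ := by
      rw [Real.rpow_sub hs, Real.rpow_one]
    have hsσ : (0:ℝ) < s ^ σ₁ := Real.rpow_pos_of_pos hs _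
    have hRσ : (0:ℝ) < R ^ σ₁ := Real.rpow_pos_of_pos hR0 _
    show s / φ s ≤ a * R ^ σ₁ / φ R * s ^ (1 - σ₁)
    rw [div_le_iff₀ hφs, hs1]
    have key : a * R ^ σ₁ / φ R * (s / s ^ σ₁) * (a⁻¹ * (s ^ σ₁ / R ^ σ₁) * φ R) = s := by
      field_simp
    calc s = a * R ^ σ₁ / φ R * (s / s ^ σ₁) * (a⁻¹ * (s ^ σ₁ / R ^ σ₁) * φ R) := key.symm
      _ ≤ a * R ^ σ₁ / φ R * (s / s ^ σ₁) * φ s :=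
          mul_le_mul_of_nonneg_left h (by positivity)
  -- integrability
  have hint2 : IntervalIntegrable (fun s => a * R ^ σ₂ / φ R * s ^ (1 - σ₂)) volume 0 R :=
    (intervalIntegral.intervalIntegrable_rpow' (by linarith)).const_mul _
  have hint1 : IntervalIntegrable (fun s => a * R ^ σ₁ / φ R * s ^ (1 - σ₁)) volume R 1 :=
    (intervalIntegral.intervalIntegrable_rpow' (by linarith)).const_mul _
  have hint1' : IntervalIntegrable (fun s => a⁻¹ * R ^ σ₁ / φ R * s ^ (1 - σ₁)) volume 0 R :=
    (intervalIntegral.intervalIntegrable_rpow' (by linarith)).const_mul _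
  have hgL : IntervalIntegrable g volume 0 R := by
    rw [intervalIntegrable_iff_integrableOn_Ioc_of_le hR0.le]
    refine Integrable.mono ((intervalIntegrable_iff_integrableOn_Ioc_of_le hR0.le).mp hint2)
      hgmeas.aestronglyMeasurable ?_
    rw [ae_restrict_iff' measurableSet_Ioc]
    filter_upwards with s hs
    have h1 := hub2 s hs.1 hs.2
    have h2 := hgnonneg s hs.1
    rw [Real.norm_eq_abs, Real.norm_eq_abs, abs_of_nonneg h2,
      abs_of_nonneg (le_trans h2 h1)]
    exact h1
  have hgK : IntervalIntegrable g volume R 1 := by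
    rw [intervalIntegrable_iff_integrableOn_Ioc_of_le hR1.le]
    refine Integrable.mono ((intervalIntegrable_iff_integrableOn_Ioc_of_le hR1.le).mp hint1)
      hgmeas.aestronglyMeasurable ?_
    rw [ae_restrict_iff' measurableSet_Ioc]
    filter_upwards with s hs
    have h1 := hub1 s hs.1.le
    have h2 := hgnonneg s (lt_of_lt_of_le hR0 hs.1.le)
    rw [Real.norm_eq_abs, Real.norm_eq_abs, abs_of_nonneg h2,
      abs_of_nonneg (le_trans h2 h1)]
    exact h1
  set L : ℝ := ∫ s in (0:ℝ)..R, g s with hLdef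
  set K : ℝ := ∫ s in R..(1:ℝ), g s with hKdef
  -- rpow integrals
  have hpow0R : (∫ s in (0:ℝ)..R, s ^ (1 - σ₁)) = R ^ (2 - σ₁) / (2 - σ₁) := by
    rw [integral_rpow (Or.inl (by linarith))]
    rw [Real.zero_rpow (by linarith : 1 - σ₁ + 1 ≠ 0)]
    norm_num
    ring_nf
  have hpowR1 : (∫ s in R..(1:ℝ), s ^ (1 - σ₁)) = (1 - R ^ (2 - σ₁)) / (2 - σ₁) := by
    rw [integral_rpow (Or.inl (by linarith))]
    rw [Real.one_rpow]
    ring_nf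
  -- bounds on L and K
  have hR2 : R ^ σ₁ * R ^ (2 - σ₁) = R ^ 2 := by
    rw [← Real.rpow_natCast R 2, ← Real.rpow_add hR0]
    norm_num
  have hLlb : a⁻¹ * R ^ 2 / ((2 - σ₁) * φ R) ≤ L := by
    have hmono : (∫ s in (0:ℝ)..R, a⁻¹ * R ^ σ₁ / φ R * s ^ (1 - σ₁)) ≤ L := by
      rw [hLdef, intervalIntegral.integral_of_le hR0.le,
        intervalIntegral.integral_of_le hR0.le]
      refine setIntegral_mono_on
        ((intervalIntegrable_iff_integrableOn_Ioc_of_le hR0.le).mp hint1')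
        ((intervalIntegrable_iff_integrableOn_Ioc_of_le hR0.le).mp hgL)
        measurableSet_Ioc ?_
      intro s hs
      exact hlb s hs.1 hs.2
    calc a⁻¹ * R ^ 2 / ((2 - σ₁) * φ R)
        = a⁻¹ * R ^ σ₁ / φ R * (R ^ (2 - σ₁) / (2 - σ₁)) := by
          rw [← hR2]; field_simp
      _ = ∫ s in (0:ℝ)..R, a⁻¹ * R ^ σ₁ / φ R * s ^ (1 - σ₁) := by
          rw [intervalIntegral.integral_const_mul, hpow0R]
      _ ≤ L := hmono
  have hKub : K ≤ a * R ^ σ₁ / ((2 - σ₁) * φ R) := by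
    have hmono : K ≤ ∫ s in R..(1:ℝ), a * R ^ σ₁ / φ R * s ^ (1 - σ₁) := by
      rw [hKdef, intervalIntegral.integral_of_le hR1.le,
        intervalIntegral.integral_of_le hR1.le]
      refine setIntegral_mono_on
        ((intervalIntegrable_iff_integrableOn_Ioc_of_le hR1.le).mp hgK)
        ((intervalIntegrable_iff_integrableOn_Ioc_of_le hR1.le).mp hint1)
        measurableSet_Ioc ?_
      intro s hs
      exact hub1 s hs.1.le
    have hRpow : 0 ≤ R ^ (2 - σ₁) := (Real.rpow_pos_of_pos hR0 _).le
    calc K ≤ ∫ s in R..(1:ℝ), a * R ^ σ₁ / φ R * s ^ (1 - σ₁) := hmono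
      _ = a * R ^ σ₁ / φ R * ((1 - R ^ (2 - σ₁)) / (2 - σ₁)) := by
          rw [intervalIntegral.integral_const_mul, hpowR1]
      _ ≤ a * R ^ σ₁ / φ R * (1 / (2 - σ₁)) := by
          refine mul_le_mul_of_nonneg_left ?_ (by positivity)
          exact div_le_div_of_nonneg_right (by linarith) h2σ₁.le
      _ = a * R ^ σ₁ / ((2 - σ₁) * φ R) := by field_simp
  have hLpos : 0 < L := lt_of_lt_of_le (by positivity) hLlb
  -- rewrite the statement integrals
  have hI : (∫ r in Set.Ioo (0:ℝ) 1, r / φ r) = L + K := by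
    rw [← MeasureTheory.integral_Ioc_eq_integral_Ioo,
      ← intervalIntegral.integral_of_le (by norm_num : (0:ℝ) ≤ 1)]
    rw [hLdef, hKdef]
    exact (intervalIntegral.integral_add_adjacent_intervals hgL hgK).symm
  have hJ : (∫ r in Set.Ioo (0:ℝ) 1, r * φ R / φ (r * R)) = φ R / R ^ 2 * L := by
    have hfun : ∀ r : ℝ, r * φ R / φ (r * R) = φ R / R * g (r * R) := by
      intro r
      show r * φ R / φ (r * R) = φ R / R * (r * R / φ (r * R))
      rw [div_mul_div_comm, show φ R * (r * R) = R * (r * φ R) by ring,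
        mul_div_mul_left _ _ hR0.ne']
    rw [← MeasureTheory.integral_Ioc_eq_integral_Ioo,
      ← intervalIntegral.integral_of_le (by norm_num : (0:ℝ) ≤ 1)]
    calc (∫ r in (0:ℝ)..1, r * φ R / φ (r * R))
        = ∫ r in (0:ℝ)..1, φ R / R * g (r * R) := by
          apply intervalIntegral.integral_congr
          intro x _
          exact hfun x
      _ = φ R / R * ∫ r in (0:ℝ)..1, g (r * R) := intervalIntegral.integral_const_mul _ _
      _ = φ R / R * (R⁻¹ • ∫ s in (0:ℝ)*R..(1:ℝ)*R, g s) := by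
          rw [intervalIntegral.integral_comp_mul_right g hR0.ne']
      _ = φ R / R ^ 2 * L := by
          rw [zero_mul, one_mul, smul_eq_mul, ← hLdef]
          field_simp
  constructor
  · rw [hI, hJ]
    have hkey : R ^ 2 * K ≤ a ^ 2 * R ^ σ₁ * L := by
      have h1 : a ^ 2 * R ^ σ₁ * (a⁻¹ * R ^ 2 / ((2 - σ₁) * φ R))
          = R ^ 2 * (a * R ^ σ₁ / ((2 - σ₁) * φ R)) := by
        field_simp
      have h2 : R ^ 2 * K ≤ R ^ 2 * (a * R ^ σ₁ / ((2 - σ₁) * φ R)) :=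
        mul_le_mul_of_nonneg_left hKub (by positivity)
      have h3 : a ^ 2 * R ^ σ₁ * (a⁻¹ * R ^ 2 / ((2 - σ₁) * φ R)) ≤ a ^ 2 * R ^ σ₁ * L :=
        mul_le_mul_of_nonneg_left hLlb (by positivity)
      linarith
    have heq : φ R * (L + K) * (φ R / R ^ 2 * L)⁻¹ = (R ^ 2 * (L + K)) / L := by
      field_simp
    rw [heq, div_le_iff₀ hLpos]
    nlinarith [hkey, hLpos.le]
  · have hr2 : R ^ 2 ≤ R ^ σ₀ := by
      rw [← Real.rpow_natCast R 2]
      apply Real.rpow_le_rpow_of_exponent_ge hR0 hR1.le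
      norm_num
      linarith
    have hr1 : R ^ σ₁ ≤ R ^ σ₀ := Real.rpow_le_rpow_of_exponent_ge hR0 hR1.le hσ₀₁
    have : a ^ 2 * R ^ σ₁ ≤ a ^ 2 * R ^ σ₀ := mul_le_mul_of_nonneg_left hr1 (by positivity)
    linarith
end
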